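/- arXiv:1907.12472 — 5 statements merged into one kernel-verified Lean document; each statement's English description precedes it below -/
import Mathlib

section
/- Let s_1,…,s_m be a closed lattice path with discrete signed area A := Σ_{v=1}^m (p_{v−1})_x · (s_v)_y. Then m ≥ 2·⌈2·√|A|⌉, where ⌈−⌉ is the ceiling function. -/
/-- A step of a lattice path: one of `(1,0)`, `(-1,0)`, `(0,1)`, `(0,-1)`. -/
def IsStep (p : ℤ × ℤ) : Prop :=
  p = (1, 0) ∨ p = (-1, 0) ∨ p = (0, 1) ∨ p = (0, -1)

/-- The discrete signed area of a lattice path `s = (s_1, …, s_m)`: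
`A = ∑_{v=1}^m (p_{v-1})_x · (s_v)_y`, where `p_v = s_1 + ⋯ + s_v`. -/
def discreteArea (s : List (ℤ × ℤ)) : ℤ :=
  ∑ v : Fin s.length, ((s.take (v : ℕ)).sum).1 * (s.get v).2

private lemma take_sum_eq' (s : List (ℤ × ℤ)) (k : ℕ) :
    (s.take k).sum = ∑ v ∈ Finset.range k, s.getD v 0 := by
  induction k with
  | zero => simp
  | succ k ih =>
    rw [Finset.sum_range_succ, ← ih, List.take_succ]
    rcases lt_or_ge k s.length with h | h
    · rw [List.getD_eq_getElem _ _ h, List.getElem?_eq_getElem h, List.sum_append]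
      simp
    · rw [List.getD_eq_default _ _ h, List.getElem?_eq_none h, List.sum_append]
      simp

/-- Lemma 4.1, combinatorial form. A closed lattice path of length `m`
with discrete signed area `A` satisfies `m ≥ 2⌈2√|A|⌉`. -/
theorem length_ge_of_discreteArea (s : List (ℤ × ℤ))
    (hs : ∀ p ∈ s, IsStep p) (hclosed : s.sum = 0) :
    (s.length : ℤ) ≥ 2 * ⌈2 * Real.sqrt |(discreteArea s : ℝ)|⌉ := by
  classical
  set n := s.length with hn
  set d : ℕ → ℤ × ℤ := fun v => s.getD v 0 with hd
  set X : ℕ → ℤ := fun k => ∑ v ∈ Finset.range k, (d v).1 with hX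
  -- the steps are lattice steps
  have hstep : ∀ v < n, d v = (1,0) ∨ d v = (-1,0) ∨ d v = (0,1) ∨ d v = (0,-1) := by
    intro v hv
    have hmem : s.getD v 0 ∈ s := by
      rw [List.getD_eq_getElem _ _ hv]; exact List.getElem_mem hv
    exact hs _ hmem
  -- prefix sums
  have hXtake : ∀ k, (s.take k).sum.1 = X k := by
    intro k
    rw [take_sum_eq', hX]
    exact Prod.fst_sum
  -- closedness
  have hXn : X n = 0 := by
    have := hXtake n
    rw [hn, List.take_length, hclosed] at this
    exact this.symm
  have hYn : ∑ v ∈ Finset.range n, (d v).2 = 0 := by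
    have h2 : (s.take n).sum.2 = ∑ v ∈ Finset.range n, (d v).2 := by
      rw [take_sum_eq']; exact Prod.snd_sum
    rw [hn, List.take_length, hclosed] at h2
    exact h2.symm
  have hX0 : X 0 = 0 := by simp [hX]
  -- the area as a range sum
  have hA : discreteArea s = ∑ v ∈ Finset.range n, X v * (d v).2 := by
    rw [discreteArea]
    rw [show (∑ v : Fin s.length, ((s.take (v : ℕ)).sum).1 * (s.get v).2)
        = ∑ v : Fin s.length, X (v : ℕ) * (d (v : ℕ)).2 from
      Finset.sum_congr rfl (by
        intro v _
        rw [hXtake]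
        congr 2
        rw [hd]
        simp only [List.get_eq_getElem]
        rw [List.getD_eq_getElem _ _ v.isLt])]
    exact Fin.sum_univ_eq_sum_range (fun v => X v * (d v).2) n
  -- horizontal and vertical step counts
  set H : ℤ := ∑ v ∈ Finset.range n, |(d v).1| with hH
  set V : ℤ := ∑ v ∈ Finset.range n, |(d v).2| with hV
  have hHV : H + V = (n : ℤ) := by
    rw [hH, hV, ← Finset.sum_add_distrib]
    rw [Finset.sum_congr rfl (fun v hv => show |(d v).1| + |(d v).2| = 1 by
      rcases hstep v (Finset.mem_range.mp hv) with h | h | h | h <;> rw [h] <;> norm_num)]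
    simp
  have hV0 : 0 ≤ V := Finset.sum_nonneg fun v _ => abs_nonneg _
  -- triangle inequality for prefix sums
  have habsX : ∀ i j : ℕ, i ≤ j → |X j - X i| ≤ ∑ v ∈ Finset.Ico i j, |(d v).1| := by
    intro i j hij
    have : X j - X i = ∑ v ∈ Finset.Ico i j, (d v).1 := (Finset.sum_Ico_eq_sub _ hij).symm
    rw [this]
    exact Finset.abs_sum_le_sum_abs _ _
  have hsplit : ∀ i j : ℕ, i ≤ j → j ≤ n →
      (∑ v ∈ Finset.Ico 0 i, |(d v).1|) + (∑ v ∈ Finset.Ico i j, |(d v).1|)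
        + (∑ v ∈ Finset.Ico j n, |(d v).1|) = H := by
    intro i j hij hjn
    rw [Finset.sum_Ico_consecutive _ (Nat.zero_le i) hij,
      Finset.sum_Ico_consecutive _ (Nat.zero_le j) hjn, hH, Finset.range_eq_Ico]
  -- key: difference of any two prefix x-coordinates is at most H/2
  have key : ∀ i ≤ n, ∀ j ≤ n, 2 * (X i - X j) ≤ H := by
    intro i hi j hj
    rcases le_total i j with hij | hij
    · have h1 := habsX i j hij
      have h2 := habsX 0 i (Nat.zero_le i)
      have h3 := habsX j n hj
      have hs1 := hsplit i j hij hj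
      rw [hX0] at h2; rw [hXn] at h3
      have e1 : X i - X j ≤ |X j - X i| := by rw [abs_sub_comm]; exact le_abs_self _
      have e2 : X i - 0 ≤ |X i - 0| := le_abs_self _
      have e3 : 0 - X j ≤ |0 - X j| := le_abs_self _
      rw [Finset.range_eq_Ico] at *
      linarith [h1, h2, h3, e1, e2, e3]
    · have h1 := habsX j i hij
      have h2 := habsX 0 j (Nat.zero_le j)
      have h3 := habsX i n hi
      have hs1 := hsplit j i hij hi
      rw [hX0] at h2; rw [hXn] at h3
      have e1 : X i - X j ≤ |X i - X j| := le_abs_self _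
      have e2 : X i - 0 ≤ |0 - X i| := by rw [abs_sub_comm]; exact le_abs_self _
      have e3 : 0 - X j ≤ |X j - 0| := by rw [abs_sub_comm]; exact le_abs_self _
      linarith [h1, h2, h3, e1, e2, e3]
  -- max and min of prefix x-coordinates
  set T : Finset ℤ := (Finset.range (n+1)).image X with hT
  have hTne : T.Nonempty := ⟨X 0, Finset.mem_image.mpr ⟨0, by simp⟩⟩
  set M : ℤ := T.max' hTne with hM
  set c : ℤ := T.min' hTne with hc
  obtain ⟨i0, hi0mem, hi0⟩ := Finset.mem_image.mp (T.max'_mem hTne)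
  obtain ⟨j0, hj0mem, hj0⟩ := Finset.mem_image.mp (T.min'_mem hTne)
  have hi0n : i0 ≤ n := Nat.lt_succ_iff.mp (Finset.mem_range.mp hi0mem)
  have hj0n : j0 ≤ n := Nat.lt_succ_iff.mp (Finset.mem_range.mp hj0mem)
  have hMm : 2 * M - 2 * c ≤ H := by
    have := key i0 hi0n j0 hj0n
    rw [hi0, hj0] at this
    linarith
  have hmemX : ∀ v ≤ n, c ≤ X v ∧ X v ≤ M := by
    intro v hv
    have hmem : X v ∈ T := Finset.mem_image.mpr ⟨v, Finset.mem_range.mpr (Nat.lt_succ_iff.mpr hv), rfl⟩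
    exact ⟨T.min'_le _ hmem, T.le_max' _ hmem⟩
  have hbound : ∀ v < n, |2 * X v - (M + c)| ≤ M - c := by
    intro v hv
    obtain ⟨h1, h2⟩ := hmemX v (le_of_lt hv)
    rw [abs_le]; constructor <;> linarith
  -- recenter the area sum
  have h2A : 2 * discreteArea s = ∑ v ∈ Finset.range n, (2 * X v - (M + c)) * (d v).2 := by
    have : ∑ v ∈ Finset.range n, (2 * X v - (M + c)) * (d v).2
        = 2 * (∑ v ∈ Finset.range n, X v * (d v).2)
          - (M + c) * ∑ v ∈ Finset.range n, (d v).2 := by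
      rw [Finset.mul_sum, Finset.mul_sum, ← Finset.sum_sub_distrib]
      exact Finset.sum_congr rfl fun v _ => by ring
    rw [this, hYn, hA]; ring
  have habs2A : 2 * |discreteArea s| ≤ (M - c) * V := by
    calc 2 * |discreteArea s| = |2 * discreteArea s| := by rw [abs_mul]; norm_num
      _ = |∑ v ∈ Finset.range n, (2 * X v - (M + c)) * (d v).2| := by rw [h2A]
      _ ≤ ∑ v ∈ Finset.range n, |(2 * X v - (M + c)) * (d v).2| :=
          Finset.abs_sum_le_sum_abs _ _
      _ ≤ ∑ v ∈ Finset.range n, (M - c) * |(d v).2| := by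
          refine Finset.sum_le_sum fun v hv => ?_
          rw [abs_mul]
          exact mul_le_mul_of_nonneg_right (hbound v (Finset.mem_range.mp hv)) (abs_nonneg _)
      _ = (M - c) * V := by rw [hV, Finset.mul_sum]
  -- 16 |A| ≤ n²
  have h16 : 16 * |discreteArea s| ≤ (n : ℤ)^2 := by
    have h4 : 4 * |discreteArea s| ≤ H * V := by
      have := mul_le_mul_of_nonneg_right hMm hV0
      nlinarith [habs2A]
    nlinarith [sq_nonneg (H - V), hHV]
  -- n is even
  have hHeven : Even H := by
    have h1 : Even (∑ v ∈ Finset.range n, (|(d v).1| - (d v).1)) := by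
      refine Finset.even_sum (f := fun v => |(d v).1| - (d v).1) ?_
      intro v hv
      rcases hstep v (Finset.mem_range.mp hv) with h | h | h | h <;> norm_num [h]
    have h2 : ∑ v ∈ Finset.range n, (|(d v).1| - (d v).1) = H - X n := by
      rw [Finset.sum_sub_distrib, hH, hX]
    rw [h2, hXn, sub_zero] at h1
    exact h1
  have hVeven : Even V := by
    have h1 : Even (∑ v ∈ Finset.range n, (|(d v).2| - (d v).2)) := by
      refine Finset.even_sum (f := fun v => |(d v).2| - (d v).2) ?_
      intro v hv
      rcases hstep v (Finset.mem_range.mp hv) with h | h | h | h <;> norm_num [h]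
    have h2 : ∑ v ∈ Finset.range n, (|(d v).2| - (d v).2) = V - 0 := by
      rw [Finset.sum_sub_distrib, hV, hYn]
    rw [h2, sub_zero] at h1
    exact h1
  have hneven : Even (n : ℤ) := by rw [← hHV]; exact hHeven.add hVeven
  obtain ⟨t, ht⟩ := hneven
  have ht2 : (n : ℤ) = 2 * t := by linarith
  have ht0 : 0 ≤ t := by
    have : (0:ℤ) ≤ (n:ℤ) := Int.natCast_nonneg n
    linarith
  -- final computation with the ceiling
  have hceil : ⌈2 * Real.sqrt |(discreteArea s : ℝ)|⌉ ≤ t := by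
    rw [Int.ceil_le]
    have habs : |(discreteArea s : ℝ)| = ((|discreteArea s| : ℤ) : ℝ) := (Int.cast_abs ..).symm
    have h16R : 16 * |(discreteArea s : ℝ)| ≤ ((n:ℤ) : ℝ)^2 := by
      rw [habs]; exact_mod_cast h16
    have h4t : 4 * |(discreteArea s : ℝ)| ≤ (t : ℝ)^2 := by
      have : ((n:ℤ) : ℝ) = 2 * (t : ℝ) := by exact_mod_cast ht2
      rw [this] at h16R; nlinarith
    have ht0R : (0:ℝ) ≤ (t : ℝ) := by exact_mod_cast ht0
    have hsq : 2 * Real.sqrt |(discreteArea s : ℝ)| = Real.sqrt (4 * |(discreteArea s : ℝ)|) := by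
      rw [Real.sqrt_mul (by norm_num : (0:ℝ) ≤ 4),
        show Real.sqrt 4 = 2 by rw [show (4:ℝ) = 2^2 by norm_num, Real.sqrt_sq (by norm_num)]]
    rw [hsq]
    calc Real.sqrt (4 * |(discreteArea s : ℝ)|) ≤ Real.sqrt ((t:ℝ)^2) := Real.sqrt_le_sqrt h4t
      _ = (t : ℝ) := by rw [Real.sqrt_sq ht0R]
  rw [ge_iff_le, ht2]
  linarith
end

section
/- Let w = ((i_1,ε_1),…,(i_m,ε_m)) be a signed word over n letters and fix indices i ≠ j in {1,…,n}. Suppose the signed count of occurrences of the letter i in w is zero (i.e. Σ_{v : i_v = i} ε_v = 0) and likewise the signed count of occurrences of the letter j is zero. If e_{ij}(w) = A, then m ≥ 2·⌈2·√|A|⌉, where ⌈−⌉ is the ceiling function. -/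
/-!
Let `f` and `g` be the signed indicators of the letters `i` and `j` along `w`, and let `P`, `Q`
be the sums of their positive parts. Since the total signed counts vanish, each of `i`, `j` occurs
`2P`, resp. `2Q`, times, so `2(P + Q) ≤ m`; moreover any two partial sums of `f` differ by at most
`P`. Writing `e_{ij}(w) = ∑_v g_v S_v` with `S_v` the partial sums of `f`, and using `∑ g = 0` to
recentre the `S_v` at their minimum, gives `|e_{ij}(w)| ≤ QP`. Then AM-GM yields
`2√|A| ≤ 2√(QP) ≤ P + Q ≤ m / 2`.
-/

/-- `eij w i j` is the signed count of occurrences of the letter `i` appearing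
(weakly) before an occurrence of the letter `j` in the signed word `w`:
`∑_{1 ≤ u ≤ v ≤ m} δ(i_u, i) · δ(i_v, j) · ε_u · ε_v`. -/
def eij (w : List (ℕ × ℤ)) (i j : ℕ) : ℤ :=
  ∑ v : Fin w.length, ∑ u : Fin w.length,
    if u ≤ v ∧ (w.get u).1 = i ∧ (w.get v).1 = j
    then (w.get u).2 * (w.get v).2 else 0

/-- The signed count of occurrences of the letter `i` in the signed word `w`:
`∑_{v : i_v = i} ε_v`. -/
def signedCount (w : List (ℕ × ℤ)) (i : ℕ) : ℤ :=
  ∑ v : Fin w.length, if (w.get v).1 = i then (w.get v).2 else 0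

open Finset

section OrderedRing

variable {ι R : Type*} [CommRing R] [LinearOrder R] [IsStrictOrderedRing R]

lemma abs_sum_le_sum_posPart_of_subset [DecidableEq ι] {s t : Finset ι} (f : ι → R) (hst : s ⊆ t)
    (hf : ∑ x ∈ t, f x = 0) : |∑ x ∈ s, f x| ≤ ∑ x ∈ t, (f x)⁺ := by
  have sum_le : ∀ s' ⊆ t, ∑ x ∈ s', f x ≤ ∑ x ∈ t, (f x)⁺ := fun s' hs' =>
    (sum_le_sum fun x _ => le_posPart (f x)).trans
      (sum_le_sum_of_subset_of_nonneg hs' fun x _ _ => posPart_nonneg (f x))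
  have hcompl : ∑ x ∈ t \ s, f x = -∑ x ∈ s, f x := by
    linarith [sum_sdiff (f := f) hst]
  rw [abs_le]
  constructor
  · linarith [sum_le (t \ s) sdiff_subset]
  · exact sum_le s hst

lemma sum_abs_eq_two_mul_sum_posPart {s : Finset ι} (f : ι → R) (hf : ∑ x ∈ s, f x = 0) :
    ∑ x ∈ s, |f x| = 2 * ∑ x ∈ s, (f x)⁺ := by
  have habs : ∀ x, |f x| = 2 * (f x)⁺ - f x := fun x => by
    linarith [posPart_add_negPart (f x), posPart_sub_negPart (f x)]
  simp only [habs, sum_sub_distrib, ← mul_sum, hf, sub_zero]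

lemma sum_mul_le_sum_posPart_mul {s : Finset ι} (g x : ι → R) (d : R)
    (hg : ∑ v ∈ s, g v = 0) (hx : ∀ v ∈ s, ∀ v' ∈ s, x v - x v' ≤ d) :
    ∑ v ∈ s, g v * x v ≤ (∑ v ∈ s, (g v)⁺) * d := by
  rcases s.eq_empty_or_nonempty with rfl | hs
  · simp
  obtain ⟨v₀, hv₀, hmin⟩ := exists_min_image s x hs
  -- Recentred at the minimum, `0 ≤ x v - x v₀ ≤ d`, so each term is at most `(g v)⁺ * d`.
  have hrecentre : ∑ v ∈ s, g v * x v = ∑ v ∈ s, g v * (x v - x v₀) := by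
    simp only [mul_sub, sum_sub_distrib, ← sum_mul, hg, zero_mul, sub_zero]
  rw [hrecentre, sum_mul]
  refine sum_le_sum fun v hv => ?_
  have hnonneg : 0 ≤ x v - x v₀ := sub_nonneg.2 (hmin v hv)
  calc g v * (x v - x v₀) ≤ (g v)⁺ * (x v - x v₀) :=
        mul_le_mul_of_nonneg_right (le_posPart (g v)) hnonneg
    _ ≤ (g v)⁺ * d := mul_le_mul_of_nonneg_left (hx v hv v₀ hv₀) (posPart_nonneg (g v))

lemma abs_sum_mul_le_sum_posPart_mul {s : Finset ι} (g x : ι → R) (d : R)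
    (hg : ∑ v ∈ s, g v = 0) (hx : ∀ v ∈ s, ∀ v' ∈ s, x v - x v' ≤ d) :
    |∑ v ∈ s, g v * x v| ≤ (∑ v ∈ s, (g v)⁺) * d := by
  have hneg := sum_mul_le_sum_posPart_mul g (-x) d hg fun v hv v' hv' => by
    simp only [Pi.neg_apply]
    linarith [hx v' hv' v hv]
  simp only [Pi.neg_apply, mul_neg, sum_neg_distrib] at hneg
  exact abs_le.2 ⟨by linarith, sum_mul_le_sum_posPart_mul g x d hg hx⟩

end OrderedRing

lemma two_mul_sqrt_le_add {a p q : ℝ} (hp : 0 ≤ p) (hq : 0 ≤ q) (h : a ≤ p * q) :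
    2 * √a ≤ p + q := by
  calc 2 * √a ≤ 2 * (√p * √q) := by
        rw [← Real.sqrt_mul hp]
        gcongr
    _ ≤ p + q := by
        nlinarith [sq_nonneg (√p - √q), Real.sq_sqrt hp, Real.sq_sqrt hq]

section SignedWord

variable (w : List (ℕ × ℤ))

def letterSign (i : ℕ) (v : Fin w.length) : ℤ :=
  if (w.get v).1 = i then (w.get v).2 else 0

lemma eij_eq_sum_letterSign_mul (i j : ℕ) :
    eij w i j = ∑ v, letterSign w j v * ∑ u ∈ Iic v, letterSign w i u := by
  unfold eij letterSign
  refine sum_congr rfl fun v _ => ?_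
  rw [mul_sum, ← filter_ge_eq_Iic, sum_filter]
  refine sum_congr rfl fun u _ => ?_
  split_ifs <;> simp_all [mul_comm]

lemma abs_eij_le {i j : ℕ} (hci : signedCount w i = 0) (hcj : signedCount w j = 0) :
    |eij w i j| ≤ (∑ v, (letterSign w j v)⁺) * ∑ u, (letterSign w i u)⁺ := by
  rw [eij_eq_sum_letterSign_mul]
  refine abs_sum_mul_le_sum_posPart_mul _ _ _ hcj fun v _ v' _ => ?_
  have hdiff : ∀ a b : Fin w.length, b ≤ a →
      |∑ u ∈ Iic a, letterSign w i u - ∑ u ∈ Iic b, letterSign w i u|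
        ≤ ∑ u, (letterSign w i u)⁺ := fun a b hba => by
    rw [← sum_sdiff_eq_sub (Iic_subset_Iic.2 hba)]
    exact abs_sum_le_sum_posPart_of_subset _ (subset_univ _) hci
  rcases le_total v' v with h | h
  · exact (abs_le.1 (hdiff v v' h)).2
  · linarith [(abs_le.1 (hdiff v' v h)).1]

lemma abs_letterSign_add_abs_letterSign_le_one (hw : ∀ p ∈ w, p.2 = 1 ∨ p.2 = -1) {i j : ℕ}
    (hij : i ≠ j) (v : Fin w.length) : |letterSign w i v| + |letterSign w j v| ≤ 1 := by
  unfold letterSign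
  rcases hw _ (w.get_mem v) with h | h <;>
    split_ifs with hi hj <;> simp_all

lemma two_mul_sum_posPart_add_le_length (hw : ∀ p ∈ w, p.2 = 1 ∨ p.2 = -1) {i j : ℕ}
    (hij : i ≠ j) (hci : signedCount w i = 0) (hcj : signedCount w j = 0) :
    2 * ((∑ v, (letterSign w j v)⁺) + ∑ u, (letterSign w i u)⁺) ≤ w.length := by
  rw [mul_add, ← sum_abs_eq_two_mul_sum_posPart (letterSign w j) hcj,
    ← sum_abs_eq_two_mul_sum_posPart (letterSign w i) hci,
    add_comm, ← sum_add_distrib]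
  calc ∑ v, (|letterSign w i v| + |letterSign w j v|) ≤ ∑ _v : Fin w.length, (1 : ℤ) :=
        sum_le_sum fun v _ => abs_letterSign_add_abs_letterSign_le_one w hw hij v
    _ = w.length := by simp

end SignedWord

theorem length_ge_of_eij_general (n : ℕ) (w : List (ℕ × ℤ))
    (hw : ∀ p ∈ w, p.1 ∈ Finset.Icc 1 n ∧ (p.2 = 1 ∨ p.2 = -1))
    (i j : ℕ) (hij : i ≠ j)
    (hci : signedCount w i = 0) (hcj : signedCount w j = 0)
    (A : ℤ) (hA : eij w i j = A) :
    (w.length : ℤ) ≥ 2 * ⌈2 * Real.sqrt |(A : ℝ)|⌉ := by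
  set P := ∑ u, (letterSign w i u)⁺
  set Q := ∑ v, (letterSign w j v)⁺
  have hsign : ∀ p ∈ w, p.2 = 1 ∨ p.2 = -1 := fun p hp => (hw p hp).2
  have hlength : 2 * (Q + P) ≤ w.length :=
    two_mul_sum_posPart_add_le_length w hsign hij hci hcj
  have hAQP : |A| ≤ Q * P := hA ▸ abs_eij_le w hci hcj
  have hceil : ⌈2 * √|(A : ℝ)|⌉ ≤ Q + P := by
    rw [Int.ceil_le]
    push_cast
    exact two_mul_sqrt_le_add (by positivity) (by positivity) (by exact_mod_cast hAQP)
  omega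

/-- Corollary 4.2. If `w` is a signed word of length `m` over `n`
letters, `i ≠ j` are letters whose signed counts of occurrences in `w` both vanish,
and `e_{ij}(w) = A`, then `m ≥ 2⌈2√|A|⌉`. -/
theorem length_ge_of_eij (n : ℕ) (w : List (ℕ × ℤ))
    (hw : ∀ p ∈ w, p.1 ∈ Finset.Icc 1 n ∧ (p.2 = 1 ∨ p.2 = -1))
    (i j : ℕ) (hi : i ∈ Finset.Icc 1 n) (hj : j ∈ Finset.Icc 1 n) (hij : i ≠ j)
    (hci : signedCount w i = 0) (hcj : signedCount w j = 0)
    (A : ℤ) (hA : eij w i j = A) :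
    (w.length : ℤ) ≥ 2 * ⌈2 * Real.sqrt |(A : ℝ)|⌉ :=
  length_ge_of_eij_general n w hw i j hij hci hcj A hA
end

section
/- Let s_1,…,s_m be a closed lattice path, let h be the number of steps equal to (1,0) and v the number of steps equal to (0,1), and let A := Σ_{v=1}^m (p_{v−1})_x · (s_v)_y be its discrete signed area. Then |A| ≤ h·v. -/
/-!
Closedness forces exactly `h` steps `(-1,0)` and `v` steps `(0,-1)`. Writing `x i` for the
abscissa of the vertex before step `i`, the area is `∑ x i` over the `v` up-steps minus `∑ x j`
over the `v` down-steps. Each difference `x i - x j` is the horizontal displacement of a subpath,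
so `|x i - x j| ≤ h`; averaging over all `v²` pairs `(i, j)` gives `|A| ≤ v h`.
-/

open Finset

theorem Finset.abs_sum_sub_sum_le_card_mul {ι R : Type*} [CommRing R] [LinearOrder R]
    [IsStrictOrderedRing R] {P N : Finset ι} {f : ι → R} {c : R} (hcard : #P = #N)
    (hf : ∀ i ∈ P, ∀ j ∈ N, |f i - f j| ≤ c) :
    |∑ i ∈ P, f i - ∑ j ∈ N, f j| ≤ #P * c := by
  rcases N.eq_empty_or_nonempty with rfl | hN
  · simp_all
  have hdouble : (#N : R) * (∑ i ∈ P, f i - ∑ j ∈ N, f j) = ∑ i ∈ P, ∑ j ∈ N, (f i - f j) := by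
    simp only [sum_sub_distrib, sum_const, nsmul_eq_mul, mul_sub, mul_sum, hcard]
  refine le_of_mul_le_mul_left ?_ (Nat.cast_pos.mpr hN.card_pos : (0 : R) < #N)
  calc (#N : R) * |∑ i ∈ P, f i - ∑ j ∈ N, f j|
      = |∑ i ∈ P, ∑ j ∈ N, (f i - f j)| := by
        rw [← hdouble, abs_mul, Nat.abs_cast]
    _ ≤ ∑ i ∈ P, ∑ j ∈ N, |f i - f j| :=
        (abs_sum_le_sum_abs _ _).trans (sum_le_sum fun i _ => abs_sum_le_sum_abs _ _)
    _ ≤ ∑ i ∈ P, ∑ j ∈ N, c := sum_le_sum fun i hi => sum_le_sum fun j hj => hf i hi j hj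
    _ = #N * (#P * c) := by simp [hcard]

namespace IsStep

variable {t : List (ℤ × ℤ)}

theorem sum_fst_eq (ht : ∀ p ∈ t, IsStep p) :
    t.sum.1 = (t.count (1, 0) : ℤ) - t.count (-1, 0) := by
  induction t with
  | nil => simp
  | cons p t ih =>
    rw [List.sum_cons, Prod.fst_add, ih fun q hq => ht q (List.mem_cons_of_mem _ hq)]
    rcases ht p List.mem_cons_self with rfl | rfl | rfl | rfl <;> simp <;> omega

theorem sum_snd_eq (ht : ∀ p ∈ t, IsStep p) :
    t.sum.2 = (t.count (0, 1) : ℤ) - t.count (0, -1) := by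
  induction t with
  | nil => simp
  | cons p t ih =>
    rw [List.sum_cons, Prod.snd_add, ih fun q hq => ht q (List.mem_cons_of_mem _ hq)]
    rcases ht p List.mem_cons_self with rfl | rfl | rfl | rfl <;> simp <;> omega

theorem abs_sum_fst_le (ht : ∀ p ∈ t, IsStep p) :
    |t.sum.1| ≤ max (t.count (1, 0) : ℤ) (t.count (-1, 0)) := by
  rw [sum_fst_eq ht, abs_le]
  omega

theorem abs_sum_fst_take_sub_sum_fst_take_le (ht : ∀ p ∈ t, IsStep p) (a b : ℕ) :
    |(t.take a).sum.1 - (t.take b).sum.1| ≤ max (t.count (1, 0) : ℤ) (t.count (-1, 0)) := by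
  wlog hba : b ≤ a generalizing a b
  · rw [abs_sub_comm]
    exact this b a (by omega)
  obtain ⟨k, rfl⟩ := Nat.exists_eq_add_of_le hba
  have hseg : ((t.drop b).take k).Sublist t := (List.take_sublist _ _).trans (List.drop_sublist _ _)
  rw [List.take_add, List.sum_append, Prod.fst_add, add_sub_cancel_left]
  calc _ ≤ _ := abs_sum_fst_le fun p hp => ht p (hseg.subset hp)
    _ ≤ _ := by gcongr <;> exact hseg.count_le _

theorem discreteArea_eq_sum_sub_sum (ht : ∀ p ∈ t, IsStep p) :
    discreteArea t = ∑ i : Fin t.length with t.get i = (0, 1), (t.take i).sum.1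
      - ∑ i : Fin t.length with t.get i = (0, -1), (t.take i).sum.1 := by
  rw [discreteArea, sum_filter, sum_filter, ← sum_sub_distrib]
  refine sum_congr rfl fun i _ => ?_
  rcases ht _ (t.get_mem i) with hi | hi | hi | hi <;> rw [hi] <;> simp

end IsStep

/-- For a closed lattice path with `h` steps equal to `(1,0)` and
`v` steps equal to `(0,1)`, the discrete signed area satisfies `|A| ≤ h·v`. -/
theorem abs_discreteArea_le (s : List (ℤ × ℤ))
    (hs : ∀ p ∈ s, IsStep p) (hclosed : s.sum = 0)
    (h v : ℕ) (hh : h = s.count ((1 : ℤ), (0 : ℤ))) (hv : v = s.count ((0 : ℤ), (1 : ℤ))) :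
    |discreteArea s| ≤ (h : ℤ) * v := by
  have hx := IsStep.sum_fst_eq hs
  have hy := IsStep.sum_snd_eq hs
  simp only [hclosed, Prod.fst_zero, Prod.snd_zero] at hx hy
  have hcard (a : ℤ × ℤ) : #{i : Fin s.length | s.get i = a} = s.count a := by
    convert Fin.card_filter_univ_eq_vector_get_eq_count a ⟨s, rfl⟩ <;> rfl
  have hdist (a b : ℕ) : |(s.take a).sum.1 - (s.take b).sum.1| ≤ h := by
    simpa [hh, show s.count (-1, 0) = s.count (1, 0) by omega] using
      IsStep.abs_sum_fst_take_sub_sum_fst_take_le hs a b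
  rw [IsStep.discreteArea_eq_sum_sub_sum hs]
  calc _ ≤ (#{i : Fin s.length | s.get i = (0, 1)} : ℤ) * h :=
        abs_sum_sub_sum_le_card_mul (by rw [hcard, hcard]; omega) fun i _ j _ => hdist i j
    _ = h * v := by rw [hcard, ← hv, mul_comm]
end

section
/- Fix n ∈ ℕ, and let w be the signed word over 3 letters consisting of n copies of (3,−1), followed by n copies of (2,+1), followed by n copies of (3,+1), followed by n copies of (2,−1) (i.e. the word x_3^{−n} x_2^{n} x_3^{n} x_2^{−n}). Then e_{23}(w) = n². -/
def brg (n k : ℕ) : ℕ × ℤ :=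
  if k < n then (3, -1) else if k < 2*n then (2, 1)
  else if k < 3*n then (3, 1) else (2, -1)

lemma br_getElem? (n k : ℕ) :
    (List.replicate n ((3 : ℕ), (-1 : ℤ))
        ++ List.replicate n ((2 : ℕ), (1 : ℤ))
        ++ List.replicate n ((3 : ℕ), (1 : ℤ))
        ++ List.replicate n ((2 : ℕ), (-1 : ℤ)))[k]? =
    if k < 4*n then some (brg n k) else none := by
  unfold brg
  simp only [List.getElem?_append, List.length_append, List.length_replicate,
    List.getElem?_replicate]
  split_ifs <;> first | rfl | omega

/-- key computation of Proposition 3.1. For the signed word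
`w = x₃⁻ⁿ x₂ⁿ x₃ⁿ x₂⁻ⁿ`, we have `e₂₃(w) = n²`. -/
theorem eij_BRn (n : ℕ)
    (w : List (ℕ × ℤ))
    (hw : w = List.replicate n ((3 : ℕ), (-1 : ℤ))
        ++ List.replicate n ((2 : ℕ), (1 : ℤ))
        ++ List.replicate n ((3 : ℕ), (1 : ℤ))
        ++ List.replicate n ((2 : ℕ), (-1 : ℤ))) :
    eij w 2 3 = (n : ℤ) ^ 2 := by
  have hlen : w.length = 4*n := by simp [hw]; ring
  have hget : ∀ u : Fin w.length, w.get u = brg n (u : ℕ) := by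
    intro u
    have hu : (u : ℕ) < 4*n := hlen ▸ u.isLt
    have h1' : ∀ k, k < 4*n → w[k]? = some (brg n k) := by
      intro k hk; rw [hw, br_getElem?, if_pos hk]
    have h1 : w[(u : ℕ)]? = some (brg n u) := h1' _ hu
    have h2 : w[(u : ℕ)]? = some w[(u : ℕ)] := List.getElem?_eq_getElem u.isLt
    rw [List.get_eq_getElem]
    exact Option.some.inj (h2.symm.trans h1)
  -- rewrite as a double sum over ranges
  have key : eij w 2 3 = ∑ v ∈ Finset.range (4*n), ∑ u ∈ Finset.range (4*n),
      (if u ≤ v ∧ (brg n u).1 = 2 ∧ (brg n v).1 = 3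
       then (brg n u).2 * (brg n v).2 else 0) := by
    unfold eij
    simp only [hget, Fin.le_def]
    rw [← hlen, ← Fin.sum_univ_eq_sum_range (fun v => ∑ u ∈ Finset.range w.length, _)]
    apply Finset.sum_congr rfl
    intro v _
    rw [← Fin.sum_univ_eq_sum_range]
  rw [key]
  have inner : ∀ v ∈ Finset.range (4*n),
      (∑ u ∈ Finset.range (4*n),
        (if u ≤ v ∧ (brg n u).1 = 2 ∧ (brg n v).1 = 3
         then (brg n u).2 * (brg n v).2 else 0)) =
      if v ∈ Finset.Ico (2*n) (3*n) then (n : ℤ) else 0 := by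
    intro v hv
    rw [Finset.mem_range] at hv
    by_cases hv2 : 2*n ≤ v ∧ v < 3*n
    · have hbv : brg n v = (3, 1) := by
        unfold brg; split_ifs <;> first | rfl | omega
      rw [if_pos (Finset.mem_Ico.mpr hv2)]
      have : ∀ u ∈ Finset.range (4*n),
          (if u ≤ v ∧ (brg n u).1 = 2 ∧ (brg n v).1 = 3
           then (brg n u).2 * (brg n v).2 else 0) =
          (if u ∈ Finset.Ico n (2*n) then (1 : ℤ) else 0) := by
        intro u _
        rw [hbv]
        by_cases hu : n ≤ u ∧ u < 2*n
        · have hbu : brg n u = (2, 1) := by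
            unfold brg; split_ifs <;> first | rfl | omega
          rw [hbu, if_pos (Finset.mem_Ico.mpr hu), if_pos]
          · ring
          · exact ⟨by omega, rfl, rfl⟩
        · rw [if_neg (fun h => hu (Finset.mem_Ico.mp h)), if_neg]
          rintro ⟨huv, hu2, -⟩
          unfold brg at hu2
          split_ifs at hu2 <;> omega
      rw [Finset.sum_congr rfl this, Finset.sum_ite_mem,
        Finset.inter_eq_right.mpr
          (fun x hx => Finset.mem_range.mpr (by have := Finset.mem_Ico.mp hx; omega)),
        Finset.sum_const, Nat.card_Ico]
      have h : 2*n - n = n := by omega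
      simp only [nsmul_eq_mul]
      rw [h]
      ring
    · rw [if_neg (fun h => hv2 (Finset.mem_Ico.mp h))]
      apply Finset.sum_eq_zero
      intro u _
      rw [if_neg]
      rintro ⟨huv, hu2, hv3⟩
      unfold brg at hu2 hv3
      split_ifs at hu2 <;> split_ifs at hv3 <;> omega
  rw [Finset.sum_congr rfl inner]
  have : ∀ v ∈ Finset.range (4*n),
      (if v ∈ Finset.Ico (2*n) (3*n) then (n : ℤ) else 0) =
      (if v ∈ Finset.Ico (2*n) (3*n) then (n : ℤ) else 0) := fun _ _ => rfl
  rw [Finset.sum_ite_mem,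
    Finset.inter_eq_right.mpr
      (fun x hx => Finset.mem_range.mpr (by have := Finset.mem_Ico.mp hx; omega)),
    Finset.sum_const, Nat.card_Ico]
  simp only [nsmul_eq_mul]
  rw [show 3*n - 2*n = n from by omega]
  ring
end

section
/- Let P : [0,m] → ℝ² be a closed polyomino curve: P(m) = P(0), P takes values in ℤ² at integer parameters, P is affine linear on each interval [v−1,v] for v = 1,…,m, and each restriction P|_{[v−1,v]} is either constant in one coordinate and changes the other by ±1 along an axis-parallel unit segment. Let A := ∫_0^m P₁(t)·P₂′(t) dt (the derivative exists away from the integer points). Then m ≥ 2·⌈2·√|A|⌉, where ⌈−⌉ is the ceiling function. -/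
/-! On a unit segment `x` is constant whenever `y` moves, so `A = ∑ xₖ (yₖ₊₁ - yₖ)` over the
vertices. As the `y`-increments sum to zero, `xₖ` may be measured from the midpoint `c` of the range
of `x`; a closed walk crosses that range twice, so `|xₖ - c|` is at most a quarter of the horizontal
length `H`, whence `4|A| ≤ H V ≤ (H + V)² / 4 = m² / 4` with `V` the vertical length. Finally `m` is
even because the `±1` increments `Δx + Δy` of a closed walk sum to zero, so `⌈2√|A|⌉ ≤ m / 2`. -/

open MeasureTheory Set Finset

theorem intervalIntegrable_and_integral_eq_of_eqOn_Ioo {f : ℝ → ℝ} {a b c : ℝ} (hab : a ≤ b)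
    (hf : EqOn f (fun _ => c) (Ioo a b)) :
    IntervalIntegrable f volume a b ∧ ∫ t in a..b, f t = (b - a) * c := by
  have hint : IntegrableOn f (Ioo a b) :=
    (integrableOn_const measure_Ioo_lt_top.ne).congr_fun hf.symm measurableSet_Ioo
  refine ⟨(intervalIntegrable_iff_integrableOn_Ioo_of_le hab).2 hint, ?_⟩
  rw [intervalIntegral.integral_of_le hab, integral_Ioc_eq_integral_Ioo,
    setIntegral_congr_fun measurableSet_Ioo hf, setIntegral_const, Real.volume_real_Ioo_of_le hab,
    smul_eq_mul]

theorem eqOn_fst_mul_deriv_snd_of_affine {P : ℝ → ℝ × ℝ} {a b : ℝ} {d : ℝ × ℝ}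
    (hP : ∀ t ∈ Icc a b, P t = P a + (t - a) • d) (hd : d.1 * d.2 = 0) :
    EqOn (fun t => (P t).1 * deriv (fun s => (P s).2) t) (fun _ => (P a).1 * d.2) (Ioo a b) := by
  intro t ht
  have hderiv : deriv (fun s => (P s).2) t = d.2 := by
    have hloc : (fun s => (P s).2) =ᶠ[nhds t] fun s => (P a).2 + (s - a) * d.2 := by
      filter_upwards [Ioo_mem_nhds ht.1 ht.2] with s hs
      simp [hP s (Ioo_subset_Icc_self hs)]
    rw [hloc.deriv_eq]
    exact ((((hasDerivAt_id' t).sub_const a).mul_const d.2).const_add (P a).2).deriv.trans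
      (one_mul _)
  have hx : (P t).1 = (P a).1 + (t - a) * d.1 := by simp [hP t (Ioo_subset_Icc_self ht)]
  simp only [hderiv, hx]
  linear_combination (t - a) * hd

theorem integral_fst_mul_deriv_snd_eq_sum {m : ℕ} {P : ℝ → ℝ × ℝ}
    (haffine : ∀ k : ℕ, k < m → ∀ t ∈ Icc (k : ℝ) ((k : ℝ) + 1),
      P t = P (k : ℝ) + (t - (k : ℝ)) • (P ((k : ℝ) + 1) - P (k : ℝ)))
    (haxis : ∀ k < m, (P ((k : ℝ) + 1) - P k).1 * (P ((k : ℝ) + 1) - P k).2 = 0) :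
    ∫ t in (0 : ℝ)..m, (P t).1 * deriv (fun s => (P s).2) t =
      ∑ k ∈ range m, (P k).1 * ((P ((k : ℝ) + 1)).2 - (P k).2) := by
  have hseg := fun k (hk : k < m) => intervalIntegrable_and_integral_eq_of_eqOn_Ioo
    (by linarith : (k : ℝ) ≤ k + 1) (eqOn_fst_mul_deriv_snd_of_affine (haffine k hk) (haxis k hk))
  rw [← Nat.cast_zero, ← intervalIntegral.sum_integral_adjacent_intervals fun k hk => by
    simpa using (hseg k hk).1]
  refine sum_congr rfl fun k hk => ?_
  rw [Nat.cast_succ, (hseg k (mem_range.1 hk)).2]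
  simp

theorem two_mul_dist_le_sum_dist_of_closed {α : Type*} [PseudoMetricSpace α] (f : ℕ → α)
    {m i j : ℕ} (hf : f m = f 0) (him : i ≤ m) (hjm : j ≤ m) :
    2 * dist (f i) (f j) ≤ ∑ k ∈ range m, dist (f k) (f (k + 1)) := by
  wlog hij : i ≤ j generalizing i j
  · rw [dist_comm]
    exact this hjm him (le_of_not_ge hij)
  have hback : dist (f j) (f i) ≤ dist (f j) (f m) + dist (f 0) (f i) := by
    simpa [hf] using dist_triangle (f j) (f m) (f i)
  have hsplit : ∑ k ∈ range m, dist (f k) (f (k + 1)) =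
      ∑ k ∈ Ico 0 i, dist (f k) (f (k + 1)) + ∑ k ∈ Ico i j, dist (f k) (f (k + 1)) +
        ∑ k ∈ Ico j m, dist (f k) (f (k + 1)) := by
    rw [sum_Ico_consecutive _ (Nat.zero_le i) hij,
      sum_Ico_consecutive _ (hij.trans' (Nat.zero_le i)) hjm, range_eq_Ico]
  linarith [dist_le_Ico_sum_dist f hij, dist_le_Ico_sum_dist f hjm,
    dist_le_Ico_sum_dist f (Nat.zero_le i), dist_comm (f i) (f j)]

theorem abs_sum_mul_le_of_sum_eq_zero {ι : Type*} {s : Finset ι} {a b : ι → ℝ} {c r : ℝ}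
    (hb : ∑ k ∈ s, b k = 0) (ha : ∀ k ∈ s, |a k - c| ≤ r) :
    |∑ k ∈ s, a k * b k| ≤ r * ∑ k ∈ s, |b k| := by
  have hshift : ∑ k ∈ s, a k * b k = ∑ k ∈ s, (a k - c) * b k := by
    simp only [sub_mul, sum_sub_distrib, ← mul_sum, hb, mul_zero, sub_zero]
  rw [hshift, mul_sum]
  refine (abs_sum_le_sum_abs _ _).trans (sum_le_sum fun k hk => ?_)
  rw [abs_mul]
  exact mul_le_mul_of_nonneg_right (ha k hk) (abs_nonneg _)

theorem four_mul_abs_sum_mul_sub_le (x y : ℕ → ℝ) (m : ℕ) (hx : x m = x 0) (hy : y m = y 0) :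
    4 * |∑ k ∈ range m, x k * (y (k + 1) - y k)| ≤
      (∑ k ∈ range m, |x (k + 1) - x k|) * ∑ k ∈ range m, |y (k + 1) - y k| := by
  obtain ⟨i, hi, hmin⟩ := (range (m + 1)).exists_min_image x nonempty_range_add_one
  obtain ⟨j, hj, hmax⟩ := (range (m + 1)).exists_max_image x nonempty_range_add_one
  rw [mem_range_succ_iff] at hi hj
  have hwidth : 2 * (x j - x i) ≤ ∑ k ∈ range m, |x (k + 1) - x k| := by
    have h := two_mul_dist_le_sum_dist_of_closed x hx hi hj
    rw [dist_comm, Real.dist_eq,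
      sum_congr rfl fun k _ => by rw [dist_comm, Real.dist_eq]] at h
    linarith [le_abs_self (x j - x i)]
  have hmid : ∀ k ∈ range m, |x k - (x i + x j) / 2| ≤ (x j - x i) / 2 := by
    intro k hk
    have hk' : k ∈ range (m + 1) := range_subset_range.2 m.le_succ hk
    rw [abs_le]
    constructor <;> linarith [hmin k hk', hmax k hk']
  have hdy : ∑ k ∈ range m, (y (k + 1) - y k) = 0 := by
    rw [sum_range_sub, hy, sub_self]
  have harea := abs_sum_mul_le_of_sum_eq_zero hdy hmid
  have hV : 0 ≤ ∑ k ∈ range m, |y (k + 1) - y k| := sum_nonneg fun _ _ => abs_nonneg _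
  nlinarith

def IsUnitAxisStep (d : ℝ × ℝ) : Prop :=
  d = (1, 0) ∨ d = (-1, 0) ∨ d = (0, 1) ∨ d = (0, -1)

namespace IsUnitAxisStep

variable {d : ℝ × ℝ}

theorem fst_mul_snd (h : IsUnitAxisStep d) : d.1 * d.2 = 0 := by
  rcases h with rfl | rfl | rfl | rfl <;> norm_num

theorem abs_fst_add_abs_snd (h : IsUnitAxisStep d) : |d.1| + |d.2| = 1 := by
  rcases h with rfl | rfl | rfl | rfl <;> norm_num

theorem fst_add_snd (h : IsUnitAxisStep d) : d.1 + d.2 = 1 ∨ d.1 + d.2 = -1 := by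
  rcases h with rfl | rfl | rfl | rfl <;> norm_num

end IsUnitAxisStep

theorem even_card_of_sum_eq_zero {ι : Type*} {s : Finset ι} {f : ι → ℝ}
    (hf : ∀ k ∈ s, f k = 1 ∨ f k = -1) (hsum : ∑ k ∈ s, f k = 0) : Even s.card := by
  classical
  have hneg : ∀ k ∈ s.filter (fun k => f k ≠ 1), f k = -1 := fun k hk =>
    (hf k (mem_filter.1 hk).1).resolve_left (mem_filter.1 hk).2
  rw [← sum_filter_add_sum_filter_not s (fun k => f k = 1),
    sum_congr rfl (fun k hk => (mem_filter.1 hk).2), sum_congr rfl hneg] at hsum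
  have hcard : (s.filter fun k => f k = 1).card = (s.filter fun k => f k ≠ 1).card := by
    exact_mod_cast (by simpa [sub_eq_zero, add_eq_zero_iff_eq_neg] using hsum)
  rw [← card_filter_add_card_filter_not (fun k => f k = 1), hcard]
  exact ⟨_, rfl⟩

section ClosedWalk

variable {v : ℕ → ℝ × ℝ} {m : ℕ}

theorem even_of_closed_unit_axis_walk (hv : v m = v 0)
    (hstep : ∀ k < m, IsUnitAxisStep (v (k + 1) - v k)) : Even m := by
  have hsum : ∑ k ∈ range m, ((v (k + 1) - v k).1 + (v (k + 1) - v k).2) = 0 := by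
    simp only [Prod.fst_sub, Prod.snd_sub, sum_add_distrib, sum_range_sub (fun k => (v k).1),
      sum_range_sub (fun k => (v k).2), hv, sub_self, add_zero]
  simpa using even_card_of_sum_eq_zero (fun k hk => (hstep k (mem_range.1 hk)).fst_add_snd) hsum

theorem sixteen_mul_abs_signed_area_le (hv : v m = v 0)
    (hstep : ∀ k < m, IsUnitAxisStep (v (k + 1) - v k)) :
    16 * |∑ k ∈ range m, (v k).1 * ((v (k + 1)).2 - (v k).2)| ≤ m ^ 2 := by
  set H := ∑ k ∈ range m, |(v (k + 1)).1 - (v k).1|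
  set V := ∑ k ∈ range m, |(v (k + 1)).2 - (v k).2|
  have hlen : H + V = m := by
    rw [← sum_add_distrib, sum_congr rfl fun k hk => by
      simpa using (hstep k (mem_range.1 hk)).abs_fst_add_abs_snd]
    simp
  have h4 := four_mul_abs_sum_mul_sub_le (fun k => (v k).1) (fun k => (v k).2) m
    (congrArg Prod.fst hv) (congrArg Prod.snd hv)
  nlinarith [sq_nonneg (H - V)]

end ClosedWalk

theorem polyomino_curve_length_ge_general (m : ℕ) (P : ℝ → ℝ × ℝ)
    (hclosed : P (m : ℝ) = P 0)
    (haffine : ∀ k : ℕ, k < m → ∀ t ∈ Set.Icc (k : ℝ) ((k : ℝ) + 1),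
      P t = P (k : ℝ) + (t - (k : ℝ)) • (P ((k : ℝ) + 1) - P (k : ℝ)))
    (hstep : ∀ k : ℕ, k < m →
      P ((k : ℝ) + 1) - P (k : ℝ) = ((1 : ℝ), (0 : ℝ)) ∨
      P ((k : ℝ) + 1) - P (k : ℝ) = ((-1 : ℝ), (0 : ℝ)) ∨
      P ((k : ℝ) + 1) - P (k : ℝ) = ((0 : ℝ), (1 : ℝ)) ∨
      P ((k : ℝ) + 1) - P (k : ℝ) = ((0 : ℝ), (-1 : ℝ)))
    (A : ℝ)
    (hA : A = ∫ t in (0 : ℝ)..(m : ℝ), (P t).1 * deriv (fun s => (P s).2) t) :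
    (m : ℤ) ≥ 2 * ⌈2 * Real.sqrt |A|⌉ := by
  have hwalk : ∀ k < m, IsUnitAxisStep (P ((k + 1 : ℕ) : ℝ) - P (k : ℕ)) := by
    intro k hk
    rw [Nat.cast_succ]
    exact hstep k hk
  have hclosed' : P ((m : ℕ) : ℝ) = P ((0 : ℕ) : ℝ) := by simpa using hclosed
  have hA_sum : A = ∑ k ∈ range m, (P k).1 * ((P ((k + 1 : ℕ) : ℝ)).2 - (P k).2) := by
    simpa only [Nat.cast_succ, hA] using
      integral_fst_mul_deriv_snd_eq_sum haffine fun k hk => IsUnitAxisStep.fst_mul_snd (hstep k hk)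
  have harea := sixteen_mul_abs_signed_area_le (v := fun k : ℕ => P k) hclosed' hwalk
  obtain ⟨n, rfl⟩ := even_of_closed_unit_axis_walk (v := fun k : ℕ => P k) hclosed' hwalk
  rw [← hA_sum] at harea
  have hsqrt : 2 * Real.sqrt |A| ≤ n := by
    rw [← le_div_iff₀' two_pos, Real.sqrt_le_left (by positivity)]
    push_cast at harea
    nlinarith
  have hceil : ⌈2 * Real.sqrt |A|⌉ ≤ n := Int.ceil_le.2 (by exact_mod_cast hsqrt)
  push_cast
  omega

/-- Lemma 4.1, analytic form. Let `P : [0,m] → ℝ²` be a closed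
polyomino curve: `P(m) = P(0)`, `P` takes values in `ℤ²` at integer parameters, `P`
is affine linear on each interval `[k, k+1]`, and each unit segment is axis-parallel
of length 1 (the difference of consecutive integer values is one of `(±1,0)`,
`(0,±1)`). If `A = ∮ x dy = ∫_0^m P₁(t) · P₂′(t) dt`, then `m ≥ 2⌈2√|A|⌉`. -/
theorem polyomino_curve_length_ge (m : ℕ) (P : ℝ → ℝ × ℝ)
    (hclosed : P (m : ℝ) = P 0)
    (hint : ∀ k : ℕ, k ≤ m → ∃ a b : ℤ, P (k : ℝ) = ((a : ℝ), (b : ℝ)))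
    (haffine : ∀ k : ℕ, k < m → ∀ t ∈ Set.Icc (k : ℝ) ((k : ℝ) + 1),
      P t = P (k : ℝ) + (t - (k : ℝ)) • (P ((k : ℝ) + 1) - P (k : ℝ)))
    (hstep : ∀ k : ℕ, k < m →
      P ((k : ℝ) + 1) - P (k : ℝ) = ((1 : ℝ), (0 : ℝ)) ∨
      P ((k : ℝ) + 1) - P (k : ℝ) = ((-1 : ℝ), (0 : ℝ)) ∨
      P ((k : ℝ) + 1) - P (k : ℝ) = ((0 : ℝ), (1 : ℝ)) ∨
      P ((k : ℝ) + 1) - P (k : ℝ) = ((0 : ℝ), (-1 : ℝ)))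
    (A : ℝ)
    (hA : A = ∫ t in (0 : ℝ)..(m : ℝ), (P t).1 * deriv (fun s => (P s).2) t) :
    (m : ℤ) ≥ 2 * ⌈2 * Real.sqrt |A|⌉ :=
  polyomino_curve_length_ge_general m P hclosed haffine hstep A hA
end
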